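/- Let G be a finite graph, t ≥ 1 an integer, and let P₁,…,P_t be partitions of V(G) such that every part of every Pᵢ is an independent set of G, and for all i ≠ i' the partitions Pᵢ and P_{i'} respect each other (any part of Pᵢ meets any part of P_{i'} in at most one vertex). Assign to each vertex v the label f(v) = {c_{i,j} : v lies in part j of Pᵢ, 1 ≤ i ≤ t}, using disjoint color sets for distinct partitions. Then f is a proper t-tone coloring of G: adjacent vertices receive disjoint labels, and any two distinct vertices share at most one color, so |f(u) ∩ f(v)| < d(u,v) for all distinct u, v. -/

import Mathlib

open Filter

noncomputable instance {n : ℕ} : Fintype (SimpleGraph (Fin n)) :=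
  Fintype.ofFinite _

/-- The number of edges of a graph on `Fin n`. -/
noncomputable def edgeCount {n : ℕ} (G : SimpleGraph (Fin n)) : ℕ := G.edgeSet.ncard

open scoped Classical in
/-- The probability of the event `A` under the Erdős–Rényi random graph `G_{n,p}`:
each of the `C(n,2)` potential edges appears independently with probability `p`. -/
noncomputable def erProb (n : ℕ) (p : ℝ) (A : Set (SimpleGraph (Fin n))) : ℝ :=
  ∑ G : SimpleGraph (Fin n),
    if G ∈ A then p ^ edgeCount G * (1 - p) ^ (n.choose 2 - edgeCount G) else 0

/-- `f` is a proper `t`-tone `k`-coloring of `G`: every vertex gets a `t`-element subset of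
`{0, …, k-1}`, and `|f u ∩ f v| < d(u,v)` for distinct vertices in a common component. -/
def IsTToneColoring {V : Type*} (G : SimpleGraph V) (t k : ℕ) (f : V → Finset ℕ) : Prop :=
  (∀ v, f v ⊆ Finset.range k ∧ (f v).card = t) ∧
    ∀ u v, u ≠ v → G.Reachable u v → ((f u) ∩ (f v)).card < G.dist u v

/-- The `t`-tone chromatic number `τ_t(G)`. -/
noncomputable def toneChromatic {V : Type*} (G : SimpleGraph V) (t : ℕ) : ℕ :=
  sInf {k | ∃ f, IsTToneColoring G t k f}

/-- The ordinary chromatic number, as a natural number. -/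
noncomputable def chromNum {V : Type*} (G : SimpleGraph V) : ℕ := G.chromaticNumber.toNat

/-- The maximum degree `Δ(G)`. -/
noncomputable def maxDeg {n : ℕ} (G : SimpleGraph (Fin n)) : ℕ :=
  Finset.univ.sup fun v => (G.neighborSet v).ncard

/-- The independence number `α(G)`. -/
noncomputable def indepNum {V : Type*} (G : SimpleGraph V) : ℕ :=
  sSup {k | ∃ S : Set V, S.ncard = k ∧ ∀ u ∈ S, ∀ v ∈ S, ¬ G.Adj u v}

/-- The set of vertices at graph distance at most `r` from the vertex set `Z`;
this equals `Z ∪ N¹(Z) ∪ ⋯ ∪ N^r(Z)` where `N^i(Z)` is the set of vertices at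
distance exactly `i` from `Z`. -/
def distBall {V : Type*} (G : SimpleGraph V) (Z : Set V) (r : ℕ) : Set V :=
  {v | ∃ u ∈ Z, G.Reachable u v ∧ G.dist u v ≤ r}

/-- The `i`-th power graph `G^i`: `u ~ v` iff `1 ≤ d_G(u,v) ≤ i`. -/
def powerGraph {V : Type*} (G : SimpleGraph V) (i : ℕ) : SimpleGraph V where
  Adj u v := u ≠ v ∧ G.Reachable u v ∧ G.dist u v ≤ i
  symm := by
    constructor
    rintro u v ⟨h1, h2, h3⟩
    exact ⟨h1.symm, h2.symm, by rwa [SimpleGraph.dist_comm]⟩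
  loopless := by constructor; rintro v ⟨h, _⟩; exact h rfl

/-- The set `V₀` of vertices of degree at least `(ln n)^{1/4}`. -/
def highDegSet (n : ℕ) (G : SimpleGraph (Fin n)) : Set (Fin n) :=
  {v | Real.log n ^ ((1 : ℝ)/4) ≤ ((G.neighborSet v).ncard : ℝ)}

/-! The label of `v` is the graph `{(i, g i v)}` of `i ↦ g i v`, so two labels meet exactly in the
indices `i` where `u` and `v` lie in a common part of `Pᵢ`. Independence of the parts makes this
index set empty for adjacent vertices, and mutual respect makes it a subsingleton for distinct
ones; since `d(u, v) ≥ 2` for distinct non-adjacent `u, v`, this gives `|f u ∩ f v| < d(u, v)`. -/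

open Finset

namespace SimpleGraph

theorem Reachable.lt_dist_of_le_one {V : Type*} {G : SimpleGraph V} {u v : V} {n : ℕ}
    (h : G.Reachable u v) (huv : u ≠ v) (hn : n ≤ 1) (hadj : G.Adj u v → n = 0) :
    n < G.dist u v := by
  have hpos : 0 < G.dist u v := h.pos_dist_of_ne huv
  by_cases huv' : G.Adj u v
  · rwa [hadj huv']
  · have : G.dist u v ≠ 1 := fun h1 => huv' (dist_eq_one_iff_adj.mp h1)
    omega

end SimpleGraph

section FiberLabel

variable {ι V α : Type*} [Fintype ι] [DecidableEq ι] [DecidableEq α]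

def fiberLabel (g : ι → V → α) (v : V) : Finset (ι × α) :=
  univ.image fun i => (i, g i v)

theorem card_fiberLabel (g : ι → V → α) (v : V) : #(fiberLabel g v) = Fintype.card ι := by
  rw [fiberLabel, card_image_of_injective _ fun i j h => (Prod.mk.inj h).1, card_univ]

theorem fiberLabel_inter (g : ι → V → α) (u v : V) :
    fiberLabel g u ∩ fiberLabel g v = (univ.filter fun i => g i u = g i v).image fun i => (i, g i u) := by
  ext ⟨i, a⟩
  simp only [fiberLabel, mem_inter, mem_image, mem_univ, true_and, mem_filter, Prod.mk.injEq]
  constructor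
  · rintro ⟨⟨i, rfl, rfl⟩, ⟨_, rfl, h⟩⟩
    exact ⟨_, h.symm, rfl, rfl⟩
  · rintro ⟨i, h, rfl, rfl⟩
    exact ⟨⟨i, rfl, rfl⟩, ⟨i, rfl, h.symm⟩⟩

theorem card_fiberLabel_inter (g : ι → V → α) (u v : V) :
    #(fiberLabel g u ∩ fiberLabel g v) = #{i | g i u = g i v} := by
  rw [fiberLabel_inter, card_image_of_injective _ fun i j h => (Prod.mk.inj h).1]

theorem disjoint_fiberLabel {g : ι → V → α} {u v : V} (h : ∀ i, g i u ≠ g i v) :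
    Disjoint (fiberLabel g u) (fiberLabel g v) := by
  rw [disjoint_iff_inter_eq_empty, fiberLabel_inter, image_eq_empty, filter_eq_empty_iff]
  exact fun i _ => h i

theorem card_fiberLabel_inter_le_one {g : ι → V → α} {u v : V}
    (h : ∀ i j, i ≠ j → g i u = g i v → g j u ≠ g j v) :
    #(fiberLabel g u ∩ fiberLabel g v) ≤ 1 := by
  rw [card_fiberLabel_inter, card_le_one]
  intro i hi j hj
  by_contra hij
  exact h i j hij (mem_filter.mp hi).2 (mem_filter.mp hj).2

end FiberLabel

theorem partitions_give_tone_coloring_general {V : Type*} (G : SimpleGraph V)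
    (t : ℕ) (g : Fin t → V → ℕ)
    (hindep : ∀ i, ∀ u v : V, G.Adj u v → g i u ≠ g i v)
    (hrespect : ∀ i i' : Fin t, i ≠ i' → ∀ u v : V, u ≠ v → g i u = g i v → g i' u ≠ g i' v)
    (f : V → Finset (Fin t × ℕ))
    (hf : ∀ v, f v = Finset.univ.image fun i => (i, g i v)) :
    (∀ v, (f v).card = t) ∧
    (∀ u v : V, G.Adj u v → Disjoint (f u) (f v)) ∧
    (∀ u v : V, u ≠ v → (f u ∩ f v).card ≤ 1) ∧
    (∀ u v : V, u ≠ v → G.Reachable u v → (f u ∩ f v).card < G.dist u v) := by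
  obtain rfl : f = fiberLabel g := funext hf
  have hdisj (u v : V) (huv : G.Adj u v) : Disjoint (fiberLabel g u) (fiberLabel g v) :=
    disjoint_fiberLabel fun i => hindep i u v huv
  have hle (u v : V) (huv : u ≠ v) : #(fiberLabel g u ∩ fiberLabel g v) ≤ 1 :=
    card_fiberLabel_inter_le_one fun i j hij => hrespect i j hij u v huv
  refine ⟨fun v => by rw [card_fiberLabel, Fintype.card_fin], hdisj, hle,
    fun u v huv hreach => hreach.lt_dist_of_le_one huv (hle u v huv) fun hadj => ?_⟩
  exact card_eq_zero.mpr (disjoint_iff_inter_eq_empty.mp (hdisj u v hadj))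

/-- Let `G` be a finite graph and let `t ≥ 1`. Suppose partitions
`P₁, …, P_t` of `V(G)` are given by fiber maps `g i : V → ℕ` (the parts of `Pᵢ` are the
fibers of `g i`), every part of every `Pᵢ` is independent, and distinct partitions respect
each other. Assigning to each vertex `v` the label `f v = {(i, g i v) : i}` (colors of
distinct partitions are distinguished by the first coordinate) yields a proper `t`-tone
coloring: each label has `t` colors, adjacent vertices get disjoint labels, any two distinct
vertices share at most one color, and `|f u ∩ f v| < d(u,v)` for all distinct `u, v` in a
common component. -/
theorem partitions_give_tone_coloring {V : Type*} [Fintype V] (G : SimpleGraph V)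
    (t : ℕ) (ht : 1 ≤ t) (g : Fin t → V → ℕ)
    (hindep : ∀ i, ∀ u v : V, G.Adj u v → g i u ≠ g i v)
    (hrespect : ∀ i i' : Fin t, i ≠ i' → ∀ u v : V, u ≠ v → g i u = g i v → g i' u ≠ g i' v)
    (f : V → Finset (Fin t × ℕ))
    (hf : ∀ v, f v = Finset.univ.image fun i => (i, g i v)) :
    (∀ v, (f v).card = t) ∧
    (∀ u v : V, G.Adj u v → Disjoint (f u) (f v)) ∧
    (∀ u v : V, u ≠ v → (f u ∩ f v).card ≤ 1) ∧
    (∀ u v : V, u ≠ v → G.Reachable u v → (f u ∩ f v).card < G.dist u v) :=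
  partitions_give_tone_coloring_general G t g hindep hrespect f hf
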